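/- Let I be a (full-supported) matroidal ideal of degree d = 2 in R = k[x_1,...,x_n]. Then there exist subsets S_1,...,S_m of the variable set [n] = {x_1,...,x_n} such that: (i) m ≥ 2 and |S_i| ≥ 1 for each i; (ii) S_i ∩ S_j = ∅ for i ≠ j and S_1 ∪ ... ∪ S_m = [n]; (iii) for distinct variables x, y, the product xy ∈ I if and only if x ∈ S_i and y ∈ S_j for some i ≠ j; (iv) for distinct variables x, y, the product xy ∉ I if and only if x, y ∈ S_i for some i. -/

import Mathlib

open MvPolynomial

namespace PaperDefs

variable {k : Type*} [Field k] {n : ℕ}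

/-- The total degree of an exponent vector. -/
def edeg (a : Fin n →₀ ℕ) : ℕ := ∑ i, a i

/-- `I` is a monomial ideal: it is generated by a set of monomials. -/
def IsMonomialIdeal (I : Ideal (MvPolynomial (Fin n) k)) : Prop :=
  ∃ S : Set (Fin n →₀ ℕ),
    I = Ideal.span ((fun a => (MvPolynomial.monomial a (1 : k))) '' S)

/-- The (exponent vectors of the) unique minimal monomial generating set `G(I)`:
monomials of `I` that are minimal with respect to divisibility. -/
def minGens (I : Ideal (MvPolynomial (Fin n) k)) : Set (Fin n →₀ ℕ) :=
  {a | (MvPolynomial.monomial a (1 : k)) ∈ I ∧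
    ∀ b : Fin n →₀ ℕ, b < a → (MvPolynomial.monomial b (1 : k)) ∉ I}

/-- A squarefree exponent vector. -/
def SqFree (a : Fin n →₀ ℕ) : Prop := ∀ i, a i ≤ 1

/-- `I` is a polymatroidal ideal of degree `d`. -/
def IsPolymatroidal (I : Ideal (MvPolynomial (Fin n) k)) (d : ℕ) : Prop :=
  IsMonomialIdeal I ∧ I ≠ ⊥ ∧
  (∀ a ∈ minGens I, edeg a = d) ∧
  ∀ a ∈ minGens I, ∀ b ∈ minGens I, ∀ i : Fin n, b i < a i →
    ∃ j : Fin n, a j < b j ∧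
      (MvPolynomial.monomial (a - Finsupp.single i 1 + Finsupp.single j 1) (1 : k)) ∈ I

/-- `I` is a matroidal ideal of degree `d`: a squarefree polymatroidal ideal. -/
def IsMatroidal (I : Ideal (MvPolynomial (Fin n) k)) (d : ℕ) : Prop :=
  IsPolymatroidal I d ∧ ∀ a ∈ minGens I, SqFree a

/-- `I` is full-supported: every variable divides some minimal generator. -/
def FullSupported (I : Ideal (MvPolynomial (Fin n) k)) : Prop :=
  ∀ i : Fin n, ∃ a ∈ minGens I, a i ≠ 0

/-- The maximal graded ideal `(x_1, ..., x_n)`. -/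
noncomputable def varIdeal (k : Type*) [Field k] (n : ℕ) : Ideal (MvPolynomial (Fin n) k) :=
  Ideal.span (Set.range MvPolynomial.X)

/-- The colon ideal `(I : x_i)`. -/
noncomputable def colonVar (I : Ideal (MvPolynomial (Fin n) k)) (i : Fin n) :
    Ideal (MvPolynomial (Fin n) k) :=
  I.colon ((Ideal.span {MvPolynomial.X i} : Ideal (MvPolynomial (Fin n) k)) : Set (MvPolynomial (Fin n) k))

/-- The height of an ideal: the infimum of `Order.height` over the primes containing it. -/
noncomputable def ht {R : Type*} [CommRing R] (I : Ideal R) : ℕ∞ :=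
  ⨅ (p : PrimeSpectrum R) (_ : I ≤ p.asIdeal), Order.height p

/-- `I` is unmixed: all associated primes of `R/I` have the same height. -/
def IsUnmixed (I : Ideal (MvPolynomial (Fin n) k)) : Prop :=
  ∀ p ∈ associatedPrimes (MvPolynomial (Fin n) k) (MvPolynomial (Fin n) k ⧸ I),
    ∀ q ∈ associatedPrimes (MvPolynomial (Fin n) k) (MvPolynomial (Fin n) k ⧸ I),
      ht p = ht q

/-- The arithmetical rank of `I`. -/
noncomputable def ara (I : Ideal (MvPolynomial (Fin n) k)) : ℕ :=
  sInf {t : ℕ | ∃ f : Fin t → MvPolynomial (Fin n) k,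
    (Ideal.span (Set.range f)).radical = I.radical}

/-- The squarefree Veronese ideal of degree `d`. -/
noncomputable def sqfreeVeronese (k : Type*) [Field k] (n d : ℕ) : Ideal (MvPolynomial (Fin n) k) :=
  Ideal.span ((fun s : Finset (Fin n) => ∏ i ∈ s, MvPolynomial.X i) ''
    {s : Finset (Fin n) | s.card = d})

/-- The depth of `R/I` : the supremum of lengths of `R/I`-regular sequences consisting of
elements of the maximal graded ideal. -/
noncomputable def quotDepth (I : Ideal (MvPolynomial (Fin n) k)) : ℕ :=
  sSup {r : ℕ | ∃ rs : List (MvPolynomial (Fin n) k), rs.length = r ∧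
    (∀ x ∈ rs, x ∈ varIdeal k n) ∧
    RingTheory.Sequence.IsRegular (MvPolynomial (Fin n) k ⧸ I) rs}

/-- `R/I` is Cohen–Macaulay: the depth of `R/I` equals its Krull dimension. -/
def IsCohenMacaulayQuot (I : Ideal (MvPolynomial (Fin n) k)) : Prop :=
  (quotDepth I : WithBot ℕ∞) = ringKrullDim (MvPolynomial (Fin n) k ⧸ I)

end PaperDefs

/-!
For `p ≠ q`, `x_p x_q ∈ I` exactly when `x_p x_q` is a minimal generator, so `I` is the edge ideal
of a graph on the variables. The exchange property makes non-adjacency transitive: if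
`x_p x_r ∈ I` while `x_p x_q, x_q x_r ∉ I`, take a generator `x_q x_s` (full support) and exchange
`x_s` against `x_p x_r`; this puts `x_q x_p` or `x_q x_r` in `I`. So the graph is complete
multipartite, its parts are the `S_i`, and there are at least two of them because `I ≠ 0`.
-/

open MvPolynomial PaperDefs

namespace SimpleGraph.IsCompleteMultipartite

variable {α : Type*} [Fintype α] {G : SimpleGraph α}

theorem exists_surjective_fin_eq_iff_not_adj (h : G.IsCompleteMultipartite) :
    ∃ (m : ℕ) (f : α → Fin m), Function.Surjective f ∧ ∀ p q, f p = f q ↔ ¬ G.Adj p q := by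
  classical
  let e := Fintype.equivFin (Quotient h.setoid)
  exact ⟨_, fun p => e ⟦p⟧, e.surjective.comp Quotient.mk_surjective,
    fun p q => e.apply_eq_iff_eq.trans Quotient.eq⟩

theorem exists_fin_parts (h : G.IsCompleteMultipartite) (hG : ∃ p q, G.Adj p q) :
    ∃ (m : ℕ) (S : Fin m → Finset α),
      (2 ≤ m ∧ ∀ i, (S i).Nonempty) ∧
      ((∀ i j, i ≠ j → Disjoint (S i) (S j)) ∧ ∀ p, ∃ i, p ∈ S i) ∧
      ∀ p q, (G.Adj p q ↔ ∃ i j, i ≠ j ∧ p ∈ S i ∧ q ∈ S j) ∧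
        (¬ G.Adj p q ↔ ∃ i, p ∈ S i ∧ q ∈ S i) := by
  classical
  obtain ⟨m, f, hf, hfib⟩ := h.exists_surjective_fin_eq_iff_not_adj
  have hadj : ∀ p q, G.Adj p q ↔ f p ≠ f q := fun p q => by rw [ne_eq, hfib, not_not]
  refine ⟨m, fun i => Finset.univ.filter (f · = i), ⟨?_, fun i => ?_⟩, ⟨?_, fun p => ⟨f p, by simp⟩⟩,
    fun p q => ⟨by simp [hadj], by simp [hadj, eq_comm]⟩⟩
  · obtain ⟨p, q, hpq⟩ := hG
    exact Fintype.card_fin m ▸ Fintype.one_lt_card_iff.mpr ⟨f p, f q, (hadj p q).mp hpq⟩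
  · obtain ⟨p, rfl⟩ := hf i
    exact ⟨p, by simp⟩
  · intro i j hij
    simp only [Finset.disjoint_left, Finset.mem_filter, Finset.mem_univ, true_and]
    rintro p rfl rfl
    exact hij rfl

end SimpleGraph.IsCompleteMultipartite

namespace PaperDefs

variable {k : Type*} [Field k] {n : ℕ}

theorem edeg_eq_degree (a : Fin n →₀ ℕ) : edeg a = a.degree :=
  (Finsupp.degree_eq_sum a).symm

theorem exists_mem_minGens_le {I : Ideal (MvPolynomial (Fin n) k)} {c : Fin n →₀ ℕ}
    (hc : monomial c (1 : k) ∈ I) : ∃ a ∈ minGens I, a ≤ c := by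
  obtain ⟨a, ⟨hac, haI⟩, hmin⟩ := wellFounded_lt.has_min
    {b | b ≤ c ∧ monomial b (1 : k) ∈ I} ⟨c, le_rfl, hc⟩
  exact ⟨a, ⟨haI, fun b hba hbI => hmin b ⟨hba.le.trans hac, hbI⟩ hba⟩, hac⟩

theorem mem_minGens_of_edeg_eq {I : Ideal (MvPolynomial (Fin n) k)} {d : ℕ}
    (hdeg : ∀ a ∈ minGens I, edeg a = d) {c : Fin n →₀ ℕ}
    (hc : monomial c (1 : k) ∈ I) (hcd : edeg c = d) : c ∈ minGens I := by
  obtain ⟨a, ha, hac⟩ := exists_mem_minGens_le hc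
  obtain ⟨e, rfl⟩ := le_iff_exists_add.mp hac
  have he : e.degree = 0 := by
    have ha_deg := hdeg a ha
    rw [edeg_eq_degree] at ha_deg hcd
    rw [map_add] at hcd
    omega
  simpa [(Finsupp.degree_eq_zero_iff e).mp he] using ha

theorem SqFree.exists_eq_single_add_single {a : Fin n →₀ ℕ} (hsf : SqFree a) (h2 : edeg a = 2) :
    ∃ p q, p ≠ q ∧ a = Finsupp.single p 1 + Finsupp.single q 1 := by
  classical
  have hcard : Multiset.card (Finsupp.toMultiset a) = 2 := by
    rw [Finsupp.card_toMultiset, ← h2, edeg_eq_degree, Finsupp.degree_apply, Finsupp.sum]; rfl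
  obtain ⟨p, q, hpq⟩ := Multiset.card_eq_two.mp hcard
  have hnodup : (Finsupp.toMultiset a).Nodup :=
    Multiset.nodup_iff_count_le_one.mpr fun i => by simpa using hsf i
  refine ⟨p, q, by simpa [hpq] using hnodup, ?_⟩
  rw [← Finsupp.toMultiset_toFinsupp a, hpq, Multiset.insert_eq_cons, ← Multiset.singleton_add, Multiset.toFinsupp_add,
    Multiset.toFinsupp_singleton, Multiset.toFinsupp_singleton]

theorem X_mul_X_eq_monomial (p q : Fin n) :
    (X p * X q : MvPolynomial (Fin n) k) =
      monomial (Finsupp.single p 1 + Finsupp.single q 1) 1 := by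
  rw [X, X, monomial_mul, one_mul]

def quadraticGraph (I : Ideal (MvPolynomial (Fin n) k)) : SimpleGraph (Fin n) where
  Adj p q := p ≠ q ∧ X p * X q ∈ I
  symm := ⟨fun _ _ h => ⟨h.1.symm, by rw [mul_comm]; exact h.2⟩⟩
  loopless := ⟨fun _ h => h.1 rfl⟩

theorem quadraticGraph_adj {I : Ideal (MvPolynomial (Fin n) k)} {p q : Fin n} :
    (quadraticGraph I).Adj p q ↔ p ≠ q ∧ X p * X q ∈ I := Iff.rfl

end PaperDefs

namespace PaperDefs.IsMatroidal

variable {k : Type*} [Field k] {n : ℕ} {I : Ideal (MvPolynomial (Fin n) k)}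

theorem exists_eq_single_add_single_of_mem_minGens (hI : IsMatroidal I 2) {a : Fin n →₀ ℕ}
    (ha : a ∈ minGens I) : ∃ p q, p ≠ q ∧ a = Finsupp.single p 1 + Finsupp.single q 1 :=
  (hI.2 a ha).exists_eq_single_add_single (hI.1.2.2.1 a ha)

theorem single_add_single_mem_minGens (hI : IsMatroidal I 2) {p q : Fin n}
    (hpq : X p * X q ∈ I) : Finsupp.single p 1 + Finsupp.single q 1 ∈ minGens I :=
  mem_minGens_of_edeg_eq hI.1.2.2.1 (X_mul_X_eq_monomial (k := k) p q ▸ hpq)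
    (by simp [edeg_eq_degree])

theorem exists_single_add_single_mem_minGens (hI : IsMatroidal I 2) (hfull : FullSupported I)
    (q : Fin n) : ∃ s, s ≠ q ∧ Finsupp.single q 1 + Finsupp.single s 1 ∈ minGens I := by
  obtain ⟨b, hb, hbq⟩ := hfull q
  obtain ⟨u, v, huv, rfl⟩ := hI.exists_eq_single_add_single_of_mem_minGens hb
  by_cases huq : u = q
  · exact ⟨v, huq ▸ huv.symm, huq ▸ hb⟩
  · have hvq : v = q := by
      by_contra hvq
      simp [huq, hvq] at hbq
    exact ⟨u, hvq ▸ huv, add_comm (Finsupp.single u 1) _ ▸ hvq ▸ hb⟩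

theorem quadraticGraph_isCompleteMultipartite (hI : IsMatroidal I 2) (hfull : FullSupported I) :
    (quadraticGraph I).IsCompleteMultipartite := by
  refine ⟨fun p q r hpq hqr => ?_⟩
  simp only [quadraticGraph_adj, not_and] at hpq hqr ⊢
  intro hpr hprI
  by_cases hqp : q = p
  · exact hqr (hqp ▸ hpr) (hqp ▸ hprI)
  by_cases hqr' : q = r
  · exact hpq (hqr' ▸ hpr) (hqr' ▸ hprI)
  have hqpI : X q * X p ∉ I := fun h => hpq (Ne.symm hqp) (by rwa [mul_comm])
  have hqrI : X q * X r ∉ I := hqr hqr'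
  obtain ⟨s, hsq, hb⟩ := hI.exists_single_add_single_mem_minGens hfull q
  have hsp : s ≠ p := by
    rintro rfl
    exact hqpI (by rw [X_mul_X_eq_monomial]; exact hb.1)
  have hsr : s ≠ r := by
    rintro rfl
    exact hqrI (by rw [X_mul_X_eq_monomial]; exact hb.1)
  obtain ⟨j, hj, hjI⟩ := hI.1.2.2.2 _ hb _ (hI.single_add_single_mem_minGens hprI) s
    (by simp [hsp.symm, hsr.symm, hsq.symm])
  rw [add_tsub_cancel_right, ← X_mul_X_eq_monomial] at hjI
  have hjpr : j = p ∨ j = r := by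
    by_contra! h
    simp [Finsupp.single_apply, h.1.symm, h.2.symm] at hj
  rcases hjpr with rfl | rfl
  · exact hqpI hjI
  · exact hqrI hjI

theorem exists_quadraticGraph_adj (hI : IsMatroidal I 2) : ∃ p q, (quadraticGraph I).Adj p q := by
  obtain ⟨S, hS⟩ := hI.1.1
  obtain ⟨c, hc⟩ : S.Nonempty := by
    rw [Set.nonempty_iff_ne_empty]
    rintro rfl
    exact hI.1.2.1 (by simp [hS])
  have hcI : monomial c (1 : k) ∈ I := hS ▸ Ideal.subset_span ⟨c, hc, rfl⟩
  obtain ⟨a, ha, -⟩ := exists_mem_minGens_le hcI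
  obtain ⟨p, q, hpq, rfl⟩ := hI.exists_eq_single_add_single_of_mem_minGens ha
  exact ⟨p, q, hpq, by rw [X_mul_X_eq_monomial]; exact ha.1⟩

end PaperDefs.IsMatroidal

open PaperDefs in
/-- Theorem 1.2. If `I` is a full-supported matroidal ideal of degree `2`,
then the variable set admits a partition `S_1, ..., S_m` with `m ≥ 2`, nonempty pairwise
disjoint covering blocks, such that `x·y ∈ I` iff `x` and `y` lie in different blocks, and
`x·y ∉ I` iff `x` and `y` lie in the same block. -/
theorem statement2 {k : Type*} [Field k] {n : ℕ}
    (I : Ideal (MvPolynomial (Fin n) k))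
    (hI : IsMatroidal I 2) (hfull : FullSupported I) :
    ∃ (m : ℕ) (S : Fin m → Finset (Fin n)),
      (2 ≤ m ∧ ∀ i, (S i).Nonempty) ∧
      ((∀ i j, i ≠ j → Disjoint (S i) (S j)) ∧ ∀ p : Fin n, ∃ i, p ∈ S i) ∧
      (∀ p q : Fin n, p ≠ q →
        (MvPolynomial.X p * MvPolynomial.X q ∈ I ↔
          ∃ i j, i ≠ j ∧ p ∈ S i ∧ q ∈ S j)) ∧
      (∀ p q : Fin n, p ≠ q →
        (MvPolynomial.X p * MvPolynomial.X q ∉ I ↔ ∃ i, p ∈ S i ∧ q ∈ S i)) := by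
  obtain ⟨m, S, hparts, hpartition, hadj⟩ :=
    (hI.quadraticGraph_isCompleteMultipartite hfull).exists_fin_parts hI.exists_quadraticGraph_adj
  refine ⟨m, S, hparts, hpartition, fun p q hpq => ?_, fun p q hpq => ?_⟩
  · simpa [quadraticGraph_adj, hpq] using (hadj p q).1
  · simpa [quadraticGraph_adj, hpq] using (hadj p q).2
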